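/- arXiv:2402.08512 — 4 statements merged into one kernel-verified Lean document; each statement's English description precedes it below -/
import Mathlib

section
/- Let F be the free group on two generators. Then the quotient [F,F]/[[F,F],F] is an infinite cyclic group (isomorphic to ℤ). -/
/-! Auxiliary: the discrete Heisenberg group. -/

@[ext]
structure Heis where
  x : ℤ
  y : ℤ
  z : ℤ

namespace Heis

instance : Mul Heis := ⟨fun a b => ⟨a.x + b.x, a.y + b.y, a.z + b.z + a.x * b.y⟩⟩
instance : One Heis := ⟨⟨0, 0, 0⟩⟩
instance : Inv Heis := ⟨fun a => ⟨-a.x, -a.y, a.x * a.y - a.z⟩⟩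

@[simp] lemma mul_x (a b : Heis) : (a * b).x = a.x + b.x := rfl
@[simp] lemma mul_y (a b : Heis) : (a * b).y = a.y + b.y := rfl
@[simp] lemma mul_z (a b : Heis) : (a * b).z = a.z + b.z + a.x * b.y := rfl
@[simp] lemma one_x : (1 : Heis).x = 0 := rfl
@[simp] lemma one_y : (1 : Heis).y = 0 := rfl
@[simp] lemma one_z : (1 : Heis).z = 0 := rfl
@[simp] lemma inv_x (a : Heis) : (a⁻¹).x = -a.x := rfl
@[simp] lemma inv_y (a : Heis) : (a⁻¹).y = -a.y := rfl
@[simp] lemma inv_z (a : Heis) : (a⁻¹).z = a.x * a.y - a.z := rfl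

instance : Group Heis where
  mul_assoc a b c := by ext <;> simp <;> ring
  one_mul a := by ext <;> simp
  mul_one a := by ext <;> simp
  inv_mul_cancel a := by ext <;> simp <;> ring

end Heis

section Main

open Subgroup
open scoped commutatorElement

local notation "F" => FreeGroup (Fin 2)

private def aa : F := FreeGroup.of 0
private def bb : F := FreeGroup.of 1
private def cc : F := ⁅aa, bb⁆

/-- the lift to the Heisenberg group -/
private def φH : F →* Heis := FreeGroup.lift ![⟨1, 0, 0⟩, ⟨0, 1, 0⟩]

private def γ₂ : Subgroup F := ⁅(⊤ : Subgroup F), (⊤ : Subgroup F)⁆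
private def γ₃ : Subgroup F := ⁅γ₂, (⊤ : Subgroup F)⁆

private def KK : Subgroup F := (Subgroup.closure {cc}) ⊔ γ₃

private lemma γ₃_le_K : γ₃ ≤ KK := le_sup_right

private instance : γ₂.Normal := Subgroup.commutator_normal ⊤ ⊤
private instance : γ₃.Normal := Subgroup.commutator_normal γ₂ ⊤

private lemma cc_mem_K : cc ∈ KK :=
  (le_sup_left : Subgroup.closure {cc} ≤ KK) (Subgroup.subset_closure rfl)

private lemma mem_γ₃_of_right {x w : F} (hw : w ∈ γ₂) : ⁅x, w⁆ ∈ γ₃ := by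
  have : ⁅x, w⁆ ∈ ⁅(⊤ : Subgroup F), γ₂⁆ := commutator_mem_commutator (mem_top x) hw
  rwa [Subgroup.commutator_comm] at this

private lemma comm_mem_γ₂ (x y : F) : ⁅x, y⁆ ∈ γ₂ :=
  commutator_mem_commutator (mem_top x) (mem_top y)

private lemma swapK {x y : F} (h : ⁅x, y⁆ ∈ KK) : ⁅y, x⁆ ∈ KK := by
  rw [← commutatorElement_inv]; exact KK.inv_mem h

private lemma mulLK {x z y : F} (hx : ⁅x, y⁆ ∈ KK) (hz : ⁅z, y⁆ ∈ KK) :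
    ⁅x * z, y⁆ ∈ KK := by
  have hid : ⁅x * z, y⁆ = ⁅x, ⁅z, y⁆⁆ * ⁅z, y⁆ * ⁅x, y⁆ := by
    simp only [commutatorElement_def]; group
  rw [hid]
  exact KK.mul_mem (KK.mul_mem (γ₃_le_K (mem_γ₃_of_right (comm_mem_γ₂ z y))) hz) hx

private lemma invLK {x y : F} (hx : ⁅x, y⁆ ∈ KK) : ⁅x⁻¹, y⁆ ∈ KK := by
  have hid : ⁅x⁻¹, y⁆ = ⁅x⁻¹, ⁅x, y⁆⁻¹⁆ * ⁅x, y⁆⁻¹ := by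
    simp only [commutatorElement_def]; group
  rw [hid]
  exact KK.mul_mem (γ₃_le_K (mem_γ₃_of_right (γ₂.inv_mem (comm_mem_γ₂ x y))))
    (KK.inv_mem hx)

private lemma base_mem_K (i j : Fin 2) : ⁅(FreeGroup.of i : F), FreeGroup.of j⁆ ∈ KK := by
  fin_cases i <;> fin_cases j
  · simpa using KK.one_mem
  · exact cc_mem_K
  · exact swapK cc_mem_K
  · simpa using KK.one_mem

private lemma commK (x y : F) : ⁅x, y⁆ ∈ KK := by
  induction x with
  | C1 => simpa using KK.one_mem
  | of i =>
    induction y with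
    | C1 => simpa using KK.one_mem
    | of j => exact base_mem_K i j
    | inv_of j hj => exact swapK (invLK (swapK hj))
    | mul u v hu hv => exact swapK (mulLK (swapK hu) (swapK hv))
  | inv_of i hi => exact invLK hi
  | mul u v hu hv => exact mulLK hu hv

private lemma γ₂_le_K : γ₂ ≤ KK := by
  rw [γ₂, commutator_le]
  intro g _ h _
  exact commK g h

/-- x-coordinate projection as a hom. -/
private def px : Heis →* Multiplicative ℤ where
  toFun a := Multiplicative.ofAdd a.x
  map_one' := rfl
  map_mul' a b := rfl

private def py : Heis →* Multiplicative ℤ where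
  toFun a := Multiplicative.ofAdd a.y
  map_one' := rfl
  map_mul' a b := rfl

private lemma xy_zero {g : F} (hg : g ∈ γ₂) : (φH g).x = 0 ∧ (φH g).y = 0 := by
  have hx : γ₂ ≤ (px.comp φH).ker := by
    rw [γ₂, commutator_le]
    intro a _ b _
    rw [MonoidHom.mem_ker, map_commutatorElement]
    exact commutatorElement_eq_one_iff_mul_comm.2 (mul_comm _ _)
  have hy : γ₂ ≤ (py.comp φH).ker := by
    rw [γ₂, commutator_le]
    intro a _ b _
    rw [MonoidHom.mem_ker, map_commutatorElement]
    exact commutatorElement_eq_one_iff_mul_comm.2 (mul_comm _ _)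
  constructor
  · have := hx hg; simpa [px, MonoidHom.mem_ker] using this
  · have := hy hg; simpa [py, MonoidHom.mem_ker] using this

private lemma φH_cc : φH cc = ⟨0, 0, 1⟩ := by
  have ha : φH aa = ⟨1, 0, 0⟩ := by
    simp [φH, aa, FreeGroup.lift_apply_of]
  have hb : φH bb = ⟨0, 1, 0⟩ := by
    simp [φH, bb, FreeGroup.lift_apply_of]
  rw [cc, commutatorElement_def, map_mul, map_mul, map_mul, map_inv, map_inv, ha, hb]
  ext <;> simp

private lemma γ₃_le_ker : γ₃ ≤ φH.ker := by
  rw [γ₃, commutator_le]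
  intro g hg h _
  obtain ⟨hgx, hgy⟩ := xy_zero hg
  rw [MonoidHom.mem_ker, map_commutatorElement, commutatorElement_def]
  ext <;> simp [hgx, hgy] <;> ring

/-- the z-coordinate hom on γ₂ -/
private def ψ : ↥γ₂ →* Multiplicative ℤ where
  toFun g := Multiplicative.ofAdd (φH g).z
  map_one' := by simp
  map_mul' g h := by
    have hx := (xy_zero g.2).1
    show Multiplicative.ofAdd (φH (↑g * ↑h)).z = _
    rw [map_mul, Heis.mul_z, hx]
    simp [← ofAdd_add]

private def ζ : Multiplicative ℤ →* Heis where
  toFun n := ⟨0, 0, Multiplicative.toAdd n⟩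
  map_one' := rfl
  map_mul' a b := by ext <;> simp

private lemma pow_z (n : ℤ) : ((⟨0, 0, 1⟩ : Heis) ^ n) = ⟨0, 0, n⟩ := by
  have h : (⟨0, 0, 1⟩ : Heis) = ζ (Multiplicative.ofAdd 1) := rfl
  rw [h, ← map_zpow]
  ext <;> simp [ζ]

private lemma ψ_c_pow (n : ℤ) :
    ψ (⟨cc, comm_mem_γ₂ aa bb⟩ ^ n) = Multiplicative.ofAdd n := by
  rw [map_zpow]
  have : ψ ⟨cc, comm_mem_γ₂ aa bb⟩ = Multiplicative.ofAdd (1 : ℤ) := by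
    show Multiplicative.ofAdd (φH cc).z = _
    rw [φH_cc]
  rw [this, ← ofAdd_zsmul]
  simp

/-- For the free group `F` on two generators, the quotient `[F,F]/[[F,F],F]` is
infinite cyclic (isomorphic to `ℤ`): there is a surjective homomorphism from
`[F,F]` onto `ℤ` whose kernel is exactly `[[F,F],F]`. -/
theorem freeGroup_commutator_quotient_int :
    ∃ φ : ↥(⁅(⊤ : Subgroup (FreeGroup (Fin 2))), (⊤ : Subgroup (FreeGroup (Fin 2)))⁆) →*
        Multiplicative ℤ,
      Function.Surjective φ ∧
      φ.ker = (⁅⁅(⊤ : Subgroup (FreeGroup (Fin 2))), (⊤ : Subgroup (FreeGroup (Fin 2)))⁆,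
          (⊤ : Subgroup (FreeGroup (Fin 2)))⁆).subgroupOf
          ⁅(⊤ : Subgroup (FreeGroup (Fin 2))), (⊤ : Subgroup (FreeGroup (Fin 2)))⁆ := by
  refine ⟨ψ, ?_, ?_⟩
  · intro n
    exact ⟨⟨cc, comm_mem_γ₂ aa bb⟩ ^ (Multiplicative.toAdd n),
      (ψ_c_pow _).trans (ofAdd_toAdd n)⟩
  · ext g
    constructor
    · intro hg
      -- g ∈ ker ψ, show g ∈ γ₃
      replace hg := (MonoidHom.mem_ker (f := ψ)).1 hg
      have hz : (φH (g : F)).z = 0 := by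
        have : Multiplicative.ofAdd (φH (g : F)).z = Multiplicative.ofAdd (0 : ℤ) := hg
        exact Multiplicative.ofAdd.injective this
      have hK : (g : F) ∈ KK := γ₂_le_K g.2
      rw [KK, ← SetLike.mem_coe, Subgroup.mul_normal] at hK
      obtain ⟨u, hu, v, hv, huv⟩ := hK
      have huv' : u * v = (g : F) := huv
      obtain ⟨n, hn⟩ := Subgroup.mem_closure_singleton.1 hu
      have hφv : φH v = 1 := γ₃_le_ker hv
      have hφg : φH (g : F) = φH cc ^ n := by
        rw [← huv', map_mul, hφv, mul_one, ← hn, map_zpow]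
      have hzn : ((φH cc ^ n : Heis)).z = n := by
        rw [φH_cc, pow_z]
      have hn0 : n = 0 := by rw [hφg, hzn] at hz; exact hz
      rw [hn0] at hn
      simp at hn
      have : (g : F) = v := by rw [← huv', ← hn, one_mul]
      rw [Subgroup.mem_subgroupOf]
      show (g : F) ∈ γ₃
      rw [this]; exact hv
    · intro hg
      rw [Subgroup.mem_subgroupOf] at hg
      refine (MonoidHom.mem_ker (f := ψ)).2 ?_
      have : φH (g : F) = 1 := γ₃_le_ker hg
      show Multiplicative.ofAdd (φH (g : F)).z = 1
      rw [this]
      rfl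

end Main
end

section
/- Let p be an odd prime and G a non-abelian finite p-group generated by two elements with exponent p (g^p = 1 for all g ∈ G). Then G/[[G,G],G] is a non-abelian group of order p^3 and exponent p (the Heisenberg group of order p^3). -/
/-- The monoid (in fact group) of upper unitriangular `3 × 3` matrices over `𝔽_p`
(the Heisenberg group of order `p^3`). -/
def Unitriangular3 (p : ℕ) : Submonoid (Matrix (Fin 3) (Fin 3) (ZMod p)) where
  carrier := {M | M 0 0 = 1 ∧ M 1 1 = 1 ∧ M 2 2 = 1 ∧ M 1 0 = 0 ∧ M 2 0 = 0 ∧ M 2 1 = 0}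
  one_mem' := by
    refine ⟨?_, ?_, ?_, ?_, ?_, ?_⟩ <;> simp [Matrix.one_apply]
  mul_mem' := by
    rintro A B ⟨a00, a11, a22, a10, a20, a21⟩ ⟨b00, b11, b22, b10, b20, b21⟩
    refine ⟨?_, ?_, ?_, ?_, ?_, ?_⟩ <;>
      simp [Matrix.mul_apply, Fin.sum_univ_three, a00, a11, a22, a10, a20, a21,
        b00, b11, b22, b10, b20, b21]

section Aux
variable {Q : Type*} [Group Q]

lemma pow_mod_of_pow_eq_one {g : Q} {p : ℕ} (hg : g ^ p = 1) (n : ℕ) :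
    g ^ (n % p) = g ^ n := by
  conv_rhs => rw [← Nat.mod_add_div n p]
  rw [pow_add, pow_mul, hg, one_pow, mul_one]

lemma pow_val_add {p : ℕ} [NeZero p] {g : Q} (hg : g ^ p = 1) (u v : ZMod p) :
    g ^ (u + v).val = g ^ u.val * g ^ v.val := by
  rw [ZMod.val_add, pow_mod_of_pow_eq_one hg, pow_add]

lemma pow_val_mul {p : ℕ} [NeZero p] {g : Q} (hg : g ^ p = 1) (u v : ZMod p) :
    g ^ (u * v).val = (g ^ u.val) ^ v.val := by
  rw [ZMod.val_mul, pow_mod_of_pow_eq_one hg, pow_mul]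

lemma heis_comm_pow {x y z : Q} (hz : ∀ q : Q, z * q = q * z)
    (hxy : x * y = y * x * z) (m n : ℕ) :
    x ^ m * y ^ n = y ^ n * x ^ m * z ^ (m * n) := by
  have hzc : ∀ (q : Q) (k : ℕ), z ^ k * q = q * z ^ k := fun q k =>
    ((Commute.pow_left (hz q) k)).eq
  have h1 : ∀ m : ℕ, x ^ m * y = y * x ^ m * z ^ m := by
    intro m
    induction m with
    | zero => simp
    | succ k ih =>
      calc x ^ (k+1) * y = x ^ k * (x * y) := by rw [pow_succ]; group
        _ = x ^ k * (y * x * z) := by rw [hxy]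
        _ = (x ^ k * y) * x * z := by group
        _ = (y * x ^ k * z ^ k) * x * z := by rw [ih]
        _ = y * x ^ k * (z ^ k * x) * z := by group
        _ = y * x ^ k * (x * z ^ k) * z := by rw [hzc x k]
        _ = y * (x ^ k * x) * (z ^ k * z) := by group
        _ = y * x ^ (k+1) * z ^ (k+1) := by rw [← pow_succ, ← pow_succ]
  induction n with
  | zero => simp
  | succ k ih =>
    calc x ^ m * y ^ (k+1) = (x ^ m * y ^ k) * y := by rw [pow_succ]; group
      _ = y ^ k * x ^ m * z ^ (m*k) * y := by rw [ih]
      _ = y ^ k * x ^ m * (z ^ (m*k) * y) := by group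
      _ = y ^ k * x ^ m * (y * z ^ (m*k)) := by rw [hzc y (m*k)]
      _ = y ^ k * (x ^ m * y) * z ^ (m*k) := by group
      _ = y ^ k * (y * x ^ m * z ^ m) * z ^ (m*k) := by rw [h1]
      _ = y ^ (k+1) * x ^ m * (z ^ m * z ^ (m*k)) := by rw [pow_succ']; group
      _ = y ^ (k+1) * x ^ m * z ^ (m * (k+1)) := by
            rw [← pow_add]; ring_nf

lemma heis_group_mul {A B C : Q} (hC : ∀ q : Q, C * q = q * C)
    (key : ∀ m n : ℕ, A ^ m * B ^ n = B ^ n * A ^ m * C ^ (m * n))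
    (X Y Z X' Y' Z' : ℕ) :
    (B ^ X * A ^ Y * C ^ Z) * (B ^ X' * A ^ Y' * C ^ Z') =
      B ^ (X + X') * A ^ (Y + Y') * (C ^ (Z + Z') * C ^ (Y * X')) := by
  have hCk : ∀ (q : Q) (k : ℕ), C ^ k * q = q * C ^ k := fun q k =>
    ((Commute.pow_left (hC q) k)).eq
  calc (B ^ X * A ^ Y * C ^ Z) * (B ^ X' * A ^ Y' * C ^ Z')
      = B ^ X * A ^ Y * (C ^ Z * B ^ X') * (A ^ Y' * C ^ Z') := by group
    _ = B ^ X * A ^ Y * (B ^ X' * C ^ Z) * (A ^ Y' * C ^ Z') := by rw [hCk]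
    _ = B ^ X * ((A ^ Y * B ^ X') * (C ^ Z * A ^ Y')) * C ^ Z' := by group
    _ = B ^ X * ((B ^ X' * A ^ Y * C ^ (Y * X')) * (A ^ Y' * C ^ Z)) * C ^ Z' := by
        rw [key, hCk]
    _ = B ^ (X + X') * (A ^ Y * (C ^ (Y * X') * A ^ Y')) * (C ^ Z * C ^ Z') := by
        rw [pow_add]; group
    _ = B ^ (X + X') * (A ^ Y * (A ^ Y' * C ^ (Y * X'))) * (C ^ Z * C ^ Z') := by
        rw [hCk]
    _ = B ^ (X + X') * A ^ (Y + Y') * (C ^ (Z + Z') * C ^ (Y * X')) := by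
        rw [pow_add, pow_add]; group

end Aux

open scoped commutatorElement

def mkUni (p : ℕ) (t : ZMod p × ZMod p × ZMod p) : Unitriangular3 p :=
  ⟨!![1, t.1, t.2.1; 0, 1, t.2.2; 0, 0, 1], by
    refine ⟨?_, ?_, ?_, ?_, ?_, ?_⟩ <;> simp [Matrix.vecHead, Matrix.vecTail]⟩

def uniEquiv (p : ℕ) : Unitriangular3 p ≃ (ZMod p × ZMod p × ZMod p) where
  toFun M := (M.1 0 1, M.1 0 2, M.1 1 2)
  invFun := mkUni p
  left_inv M := by
    obtain ⟨M, h00, h11, h22, h10, h20, h21⟩ := M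
    apply Subtype.ext
    dsimp [mkUni]
    ext i j
    fin_cases i <;> fin_cases j <;>
      simp [Matrix.vecHead, Matrix.vecTail, h00, h11, h22, h10, h20, h21]
  right_inv t := by
    dsimp [mkUni]

theorem card_uni (p : ℕ) : Nat.card (Unitriangular3 p) = p ^ 3 := by
  rw [Nat.card_congr (uniEquiv p)]
  simp [Nat.card_prod, Nat.card_zmod]
  ring

theorem heis_main {Q : Type*} [Group Q] [Finite Q] {p : ℕ} (hp : p.Prime)
    (hQp : IsPGroup p Q) (A B : Q) (hQgen : Subgroup.closure {A, B} = ⊤)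
    (hexpQ : ∀ g : Q, g ^ p = 1)
    (hC : ∀ q : Q, ⁅A, B⁆ * q = q * ⁅A, B⁆)
    (hnaQ : ¬ ∀ x y : Q, x * y = y * x) :
    Nat.card Q = p ^ 3 ∧ Nonempty (Q ≃* Unitriangular3 p) := by
  haveI : Fact p.Prime := ⟨hp⟩
  haveI : NeZero p := ⟨hp.pos.ne'⟩
  haveI : Fact (1 < p) := ⟨hp.one_lt⟩
  haveI : Finite (Unitriangular3 p) := Finite.of_equiv _ (uniEquiv p).symm
  set C := ⁅A, B⁆ with hCdef
  have hAB : A * B = B * A * C := by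
    have h1 : C * (B * A) = (B * A) * C := hC _
    calc A * B = C * (B * A) := by rw [hCdef, commutatorElement_def]; group
      _ = B * A * C := by rw [h1]
  have key := heis_comm_pow hC hAB
  let f : Unitriangular3 p → Q := fun M =>
    B ^ ((M.1 1 2).val) * A ^ ((M.1 0 1).val) * C ^ ((M.1 0 2).val)
  have hf1 : f 1 = 1 := by
    show B ^ (((1 : Matrix (Fin 3) (Fin 3) (ZMod p)) 1 2).val) *
      A ^ (((1 : Matrix (Fin 3) (Fin 3) (ZMod p)) 0 1).val) *
      C ^ (((1 : Matrix (Fin 3) (Fin 3) (ZMod p)) 0 2).val) = 1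
    simp [Matrix.one_apply]
  have hfmul : ∀ M W : Unitriangular3 p, f (M * W) = f M * f W := by
    rintro ⟨M, m00, m11, m22, m10, m20, m21⟩ ⟨W, w00, w11, w22, w10, w20, w21⟩
    have e01 : (M * W) 0 1 = M 0 1 + W 0 1 := by
      simp [Matrix.mul_apply, Fin.sum_univ_three, m00, w11, w21]
      ring
    have e12 : (M * W) 1 2 = M 1 2 + W 1 2 := by
      simp [Matrix.mul_apply, Fin.sum_univ_three, m10, m11, w22]
      ring
    have e02 : (M * W) 0 2 = M 0 2 + W 0 2 + M 0 1 * W 1 2 := by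
      simp [Matrix.mul_apply, Fin.sum_univ_three, m00, w22]
      ring
    show B ^ ((M * W) 1 2).val * A ^ ((M * W) 0 1).val * C ^ ((M * W) 0 2).val =
      (B ^ ((M 1 2).val) * A ^ ((M 0 1).val) * C ^ ((M 0 2).val)) *
      (B ^ ((W 1 2).val) * A ^ ((W 0 1).val) * C ^ ((W 0 2).val))
    rw [e01, e12, e02, pow_val_add (hexpQ B), pow_val_add (hexpQ A),
      pow_val_add (hexpQ C), pow_val_add (hexpQ C), pow_val_mul (hexpQ C),
      ← pow_add, ← pow_add, ← pow_add, ← pow_mul]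
    exact (heis_group_mul hC key _ _ _ _ _ _).symm
  have hfpow : ∀ (M : Unitriangular3 p) (k : ℕ), f (M ^ k) = (f M) ^ k := by
    intro M k
    induction k with
    | zero => simpa using hf1
    | succ j ih => rw [pow_succ, pow_succ, hfmul, ih]
  let Ma : Unitriangular3 p :=
    ⟨!![1, 1, 0; 0, 1, 0; 0, 0, 1], by
      refine ⟨?_, ?_, ?_, ?_, ?_, ?_⟩ <;> simp [Matrix.vecHead, Matrix.vecTail]⟩
  let Mb : Unitriangular3 p :=
    ⟨!![1, 0, 0; 0, 1, 1; 0, 0, 1], by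
      refine ⟨?_, ?_, ?_, ?_, ?_, ?_⟩ <;> simp [Matrix.vecHead, Matrix.vecTail]⟩
  have hfa : f Ma = A := by
    show B ^ ((Ma.1 1 2).val) * A ^ ((Ma.1 0 1).val) * C ^ ((Ma.1 0 2).val) = A
    simp [Ma, Matrix.vecHead, Matrix.vecTail, ZMod.val_one, ZMod.val_zero]
  have hfb : f Mb = B := by
    show B ^ ((Mb.1 1 2).val) * A ^ ((Mb.1 0 1).val) * C ^ ((Mb.1 0 2).val) = B
    simp [Mb, Matrix.vecHead, Matrix.vecTail, ZMod.val_one, ZMod.val_zero]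
  have hsurj : Function.Surjective f := by
    intro q
    have hq : q ∈ Subgroup.closure ({A, B} : Set Q) := by rw [hQgen]; trivial
    induction hq using Subgroup.closure_induction with
    | mem x hx =>
      rcases hx with h | h
      · exact ⟨Ma, h ▸ hfa⟩
      · exact ⟨Mb, h ▸ hfb⟩
    | one => exact ⟨1, hf1⟩
    | mul x y _ _ hx hy =>
      obtain ⟨M, hM⟩ := hx
      obtain ⟨W, hW⟩ := hy
      exact ⟨M * W, by rw [hfmul, hM, hW]⟩
    | inv x _ hx =>
      obtain ⟨M, hM⟩ := hx
      refine ⟨M ^ (p - 1), ?_⟩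
      rw [hfpow, hM]
      refine eq_inv_of_mul_eq_one_left ?_
      rw [← pow_succ, Nat.sub_add_cancel hp.one_lt.le]
      exact hexpQ x
  have hcard_le : Nat.card Q ≤ p ^ 3 := by
    rw [← card_uni p]
    exact Nat.card_le_card_of_surjective f hsurj
  obtain ⟨k, hk⟩ := IsPGroup.iff_card.mp hQp
  have hk3 : k = 3 := by
    have hle : k ≤ 3 := by
      have := hcard_le
      rw [hk] at this
      exact (Nat.pow_le_pow_iff_right hp.one_lt).mp this
    interval_cases k
    · exfalso
      apply hnaQ
      have hsub : Subsingleton Q := by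
        rw [pow_zero] at hk
        exact Nat.card_eq_one_iff_unique.mp hk |>.1
      exact fun x y => Subsingleton.elim _ _
    · exfalso
      rw [pow_one] at hk
      haveI := isCyclic_of_prime_card hk
      letI : CommGroup Q := IsCyclic.commGroup
      exact hnaQ fun x y => mul_comm x y
    · exact absurd (IsPGroup.commutative_of_card_eq_prime_sq hk) hnaQ
    · rfl
  have hcard : Nat.card Q = p ^ 3 := by rw [hk, hk3]
  have hbij : Function.Bijective f :=
    (Nat.bijective_iff_surjective_and_card f).mpr ⟨hsurj, by rw [card_uni p, hcard]⟩
  exact ⟨hcard, ⟨(MulEquiv.mk' (Equiv.ofBijective f hbij) hfmul).symm⟩⟩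
/-- Let `p` be an odd prime and `G` a non-abelian finite `p`-group generated by two
elements and of exponent `p`.  Then `G/[[G,G],G]` is non-abelian of order `p^3`
and exponent `p`; it is the Heisenberg group of order `p^3`. -/
theorem quotient_is_heisenberg
    (p : ℕ) (hp : p.Prime) (hodd : Odd p)
    (G : Type*) [Group G] [Finite G] (hG : IsPGroup p G)
    (a b : G) (hgen : Subgroup.closure {a, b} = ⊤)
    (hexp : ∀ g : G, g ^ p = 1)
    (hna : ¬ ∀ x y : G, x * y = y * x) :
    Nat.card (G ⧸ ⁅⁅(⊤ : Subgroup G), (⊤ : Subgroup G)⁆, (⊤ : Subgroup G)⁆) = p ^ 3 ∧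
    (∀ g : G ⧸ ⁅⁅(⊤ : Subgroup G), (⊤ : Subgroup G)⁆, (⊤ : Subgroup G)⁆, g ^ p = 1) ∧
    (¬ ∀ x y : G ⧸ ⁅⁅(⊤ : Subgroup G), (⊤ : Subgroup G)⁆, (⊤ : Subgroup G)⁆,
        x * y = y * x) ∧
    Nonempty ((G ⧸ ⁅⁅(⊤ : Subgroup G), (⊤ : Subgroup G)⁆, (⊤ : Subgroup G)⁆) ≃*
      Unitriangular3 p) := by
  haveI : Fact p.Prime := ⟨hp⟩
  set N : Subgroup G := ⁅⁅(⊤ : Subgroup G), (⊤ : Subgroup G)⁆, (⊤ : Subgroup G)⁆ with hNdef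
  haveI hNn : N.Normal := by rw [hNdef]; infer_instance
  haveI : Finite (G ⧸ N) := Quotient.finite _
  have hQp : IsPGroup p (G ⧸ N) := hG.to_quotient N
  set π := QuotientGroup.mk' N with hπ
  have hexpQ : ∀ g : G ⧸ N, g ^ p = 1 := by
    intro g
    refine QuotientGroup.induction_on g ?_
    intro x
    have h1 : π (x ^ p) = (π x) ^ p := map_pow π x p
    rw [hexp x] at h1
    simpa [hπ] using h1.symm
  have hQgen : Subgroup.closure ({π a, π b} : Set (G ⧸ N)) = ⊤ := by
    have h1 : Subgroup.map π ⊤ = ⊤ :=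
      Subgroup.map_top_of_surjective π (QuotientGroup.mk'_surjective N)
    rw [← hgen, MonoidHom.map_closure] at h1
    rw [← h1, Set.image_insert_eq, Set.image_singleton]
  have hC : ∀ q : G ⧸ N, ⁅π a, π b⁆ * q = q * ⁅π a, π b⁆ := by
    intro q
    refine QuotientGroup.induction_on q ?_
    intro x
    have hmem : ⁅⁅a, b⁆, x⁆ ∈ N := by
      rw [hNdef]
      exact Subgroup.commutator_mem_commutator
        (Subgroup.commutator_mem_commutator (Subgroup.mem_top a) (Subgroup.mem_top b))
        (Subgroup.mem_top x)
    have h1 : ⁅π ⁅a, b⁆, π x⁆ = 1 := by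
      rw [← map_commutatorElement]
      exact (QuotientGroup.eq_one_iff _).mpr hmem
    have h2 := commutatorElement_eq_one_iff_mul_comm.mp h1
    rw [map_commutatorElement] at h2
    exact h2
  obtain ⟨x₀, y₀, hx0⟩ : ∃ x y : G, ⁅x, y⁆ ∉ N := by
    by_contra h
    push_neg at h
    have hle : ⁅(⊤ : Subgroup G), (⊤ : Subgroup G)⁆ ≤ N :=
      Subgroup.commutator_le.mpr fun g1 _ g2 _ => h g1 g2
    have hnil : Group.IsNilpotent G := hG.isNilpotent
    obtain ⟨n, hn⟩ := nilpotent_iff_lowerCentralSeries.mp hnil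
    have h1eq : lowerCentralSeries (⊤ : Subgroup G) 1 = ⁅(⊤ : Subgroup G), (⊤ : Subgroup G)⁆ := rfl
    have h2eq : lowerCentralSeries (⊤ : Subgroup G) 2 = N := by rw [hNdef]; rfl
    have hfix : lowerCentralSeries (⊤ : Subgroup G) 1 = lowerCentralSeries (⊤ : Subgroup G) 2 :=
      le_antisymm (by rw [h1eq, h2eq]; exact hle)
        (lowerCentralSeries_antitone _ (by norm_num))
    have hstep : ∀ k, lowerCentralSeries (⊤ : Subgroup G) (k + 1) = lowerCentralSeries (⊤ : Subgroup G) 1 := by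
      intro k
      induction k with
      | zero => rfl
      | succ j ih =>
        calc lowerCentralSeries (⊤ : Subgroup G) (j + 1 + 1)
            = ⁅lowerCentralSeries (⊤ : Subgroup G) (j + 1), (⊤ : Subgroup G)⁆ := rfl
          _ = ⁅lowerCentralSeries (⊤ : Subgroup G) 1, (⊤ : Subgroup G)⁆ := by rw [ih]
          _ = lowerCentralSeries (⊤ : Subgroup G) 2 := rfl
          _ = lowerCentralSeries (⊤ : Subgroup G) 1 := hfix.symm
    apply hna
    intro x y
    have hb : lowerCentralSeries (⊤ : Subgroup G) 1 = ⊥ := by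
      cases n with
      | zero =>
        have htop : (⊤ : Subgroup G) = ⊥ := by rw [← lowerCentralSeries_zero (⊤ : Subgroup G)]; exact hn
        exact le_bot_iff.mp (htop ▸ le_top)
      | succ m => rw [← hstep m]; exact hn
    have hmem : ⁅x, y⁆ ∈ lowerCentralSeries (⊤ : Subgroup G) 1 := by
      rw [h1eq]
      exact Subgroup.commutator_mem_commutator (Subgroup.mem_top x) (Subgroup.mem_top y)
    rw [hb, Subgroup.mem_bot] at hmem
    exact commutatorElement_eq_one_iff_mul_comm.mp hmem
  have hnaQ : ¬ ∀ x y : G ⧸ N, x * y = y * x := by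
    intro h
    apply hx0
    have h2 : ⁅π x₀, π y₀⁆ = 1 := commutatorElement_eq_one_iff_mul_comm.mpr (h _ _)
    rw [← map_commutatorElement] at h2
    exact (QuotientGroup.eq_one_iff _).mp h2
  obtain ⟨hcard, hequiv⟩ := heis_main hp hQp (π a) (π b) hQgen hexpQ hC hnaQ
  exact ⟨hcard, hexpQ, hnaQ, hequiv⟩
end

section
/- For p an odd prime, every non-abelian group of order p^3 and exponent p is isomorphic to the group of upper unitriangular 3×3 matrices over 𝔽_p. -/
set_option linter.unusedSectionVars false

namespace NA3
variable {G : Type*} [Group G]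

theorem swap1 {a b c : G} (hc : ∀ g : G, Commute c g)
    (hba : b * a = a * b * c⁻¹) (n : ℕ) :
    b * a ^ n = a ^ n * b * (c ^ n)⁻¹ := by
  induction n with
  | zero => simp
  | succ n ih =>
    have hcn : Commute ((c ^ n)⁻¹) a := ((hc a).pow_left n).inv_left
    calc b * a ^ (n + 1) = b * a ^ n * a := by rw [pow_succ, ← mul_assoc]
      _ = a ^ n * b * (c ^ n)⁻¹ * a := by rw [ih]
      _ = a ^ n * b * a * (c ^ n)⁻¹ := by
          rw [mul_assoc (a ^ n * b), hcn.eq, ← mul_assoc]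
      _ = a ^ n * (a * b * c⁻¹) * (c ^ n)⁻¹ := by rw [mul_assoc (a ^ n), hba]
      _ = a ^ (n + 1) * b * (c ^ (n + 1))⁻¹ := by
          simp [pow_succ, mul_inv_rev, mul_assoc]

theorem swap {a b c : G} (hc : ∀ g : G, Commute c g)
    (hba : b * a = a * b * c⁻¹) (m n : ℕ) :
    b ^ m * a ^ n = a ^ n * b ^ m * (c ^ (m * n))⁻¹ := by
  induction m with
  | zero => simp
  | succ m ih =>
    have hcb : Commute ((c ^ (m * n))⁻¹) b := ((hc b).pow_left _).inv_left
    calc b ^ (m + 1) * a ^ n = b ^ m * (b * a ^ n) := by rw [pow_succ, mul_assoc]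
      _ = b ^ m * (a ^ n * b * (c ^ n)⁻¹) := by rw [swap1 hc hba]
      _ = (b ^ m * a ^ n) * b * (c ^ n)⁻¹ := by simp [mul_assoc]
      _ = a ^ n * b ^ m * (c ^ (m * n))⁻¹ * b * (c ^ n)⁻¹ := by rw [ih]
      _ = a ^ n * b ^ m * b * ((c ^ (m * n))⁻¹ * (c ^ n)⁻¹) := by
          rw [mul_assoc (a ^ n * b ^ m), hcb.eq]; simp [mul_assoc]
      _ = a ^ n * b ^ (m + 1) * (c ^ ((m + 1) * n))⁻¹ := by
          have h1 : (m + 1) * n = m * n + n := by ring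
          rw [← mul_inv_rev, ← pow_add, h1, pow_succ b]
          simp [mul_assoc, Nat.add_comm]

theorem keyN {a b c : G} (hc : ∀ g : G, Commute c g)
    (hba : b * a = a * b * c⁻¹) (U V W U' V' W' : ℕ) :
    (a ^ U * b ^ V * c ^ W) * (a ^ U' * b ^ V' * c ^ W')
      = (a ^ (U + U') * b ^ (V + V')) * (c ^ (W + W') * (c ^ (V * U'))⁻¹) := by
  calc (a ^ U * b ^ V * c ^ W) * (a ^ U' * b ^ V' * c ^ W')
      = (a ^ U * b ^ V) * (c ^ W * (a ^ U' * b ^ V' * c ^ W')) := by simp [mul_assoc]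
    _ = (a ^ U * b ^ V) * ((a ^ U' * b ^ V' * c ^ W') * c ^ W) := by
        rw [((hc _).pow_left W).eq]
    _ = a ^ U * ((b ^ V * a ^ U') * (b ^ V' * (c ^ W' * c ^ W))) := by simp [mul_assoc]
    _ = a ^ U * ((a ^ U' * b ^ V * (c ^ (V * U'))⁻¹) * (b ^ V' * (c ^ W' * c ^ W))) := by
        rw [swap hc hba]
    _ = (a ^ U * a ^ U') * (b ^ V * ((c ^ (V * U'))⁻¹ * b ^ V') * (c ^ W' * c ^ W)) := by
        simp [mul_assoc]
    _ = (a ^ U * a ^ U') * (b ^ V * (b ^ V' * (c ^ (V * U'))⁻¹) * (c ^ W' * c ^ W)) := by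
        rw [(((hc (b ^ V')).pow_left _).inv_left).eq]
    _ = (a ^ (U + U') * b ^ (V + V')) * ((c ^ (V * U'))⁻¹ * c ^ (W + W')) := by
        rw [Nat.add_comm W W']
        simp [pow_add, mul_assoc]
    _ = (a ^ (U + U') * b ^ (V + V')) * (c ^ (W + W') * (c ^ (V * U'))⁻¹) := by
        rw [(((hc (c ^ (W + W'))).pow_left _).inv_left).eq]

section zp
variable {p : ℕ} [NeZero p]

def zp (g : G) (u : ZMod p) : G := g ^ u.val

theorem zp_add {g : G} (hg : g ^ p = 1) (u v : ZMod p) :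
    zp g (u + v) = zp g u * zp g v := by
  unfold zp; rw [ZMod.val_add, ← pow_eq_pow_mod _ hg, pow_add]

theorem zp_mul_pow {g : G} (hg : g ^ p = 1) (u v : ZMod p) :
    zp g (u * v) = g ^ (u.val * v.val) := by
  unfold zp; rw [ZMod.val_mul, ← pow_eq_pow_mod _ hg]

theorem zp_zero (g : G) : zp (p := p) g 0 = 1 := by
  unfold zp; simp

theorem zp_neg {g : G} (hg : g ^ p = 1) (u : ZMod p) : zp g (-u) = (zp g u)⁻¹ := by
  apply eq_inv_of_mul_eq_one_left
  rw [← zp_add hg, neg_add_cancel, zp_zero]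

theorem zp_one {g : G} (hp : 1 < p) : zp g (1 : ZMod p) = g := by
  unfold zp
  haveI : Fact (1 < p) := ⟨hp⟩
  rw [ZMod.val_one, pow_one]

end zp
end NA3

/-- The triple parametrization of the unitriangular group. -/
def unitriEquiv (p : ℕ) : Unitriangular3 p ≃ (ZMod p × ZMod p × ZMod p) where
  toFun M := (M.1 0 1, M.1 1 2, M.1 0 2)
  invFun t := ⟨!![1, t.1, t.2.2; 0, 1, t.2.1; 0, 0, 1],
    ⟨rfl, rfl, rfl, rfl, rfl, rfl⟩⟩
  left_inv := by
    rintro ⟨M, h00, h11, h22, h10, h20, h21⟩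
    apply Subtype.ext
    ext i j
    fin_cases i <;> fin_cases j <;>
      simp [h00, h11, h22, h10, h20, h21, Matrix.vecHead, Matrix.vecTail]
  right_inv := by rintro ⟨x, y, z⟩; rfl

theorem unitri_card (p : ℕ) [NeZero p] : Nat.card (Unitriangular3 p) = p ^ 3 := by
  rw [Nat.card_congr (unitriEquiv p), Nat.card_prod, Nat.card_prod, Nat.card_zmod]
  ring

/-- For `p` an odd prime, every non-abelian group of order `p^3` and exponent `p`
is isomorphic to the group of upper unitriangular `3 × 3` matrices over `𝔽_p`. -/
theorem nonabelian_exponent_p_iso_unitriangular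
    (p : ℕ) (hp : p.Prime) (hodd : Odd p)
    (G : Type*) [Group G] (hcard : Nat.card G = p ^ 3)
    (hexp : ∀ g : G, g ^ p = 1)
    (hna : ¬ ∀ a b : G, a * b = b * a) :
    Nonempty (G ≃* Unitriangular3 p) := by
  haveI hpF : Fact p.Prime := ⟨hp⟩
  haveI : NeZero p := ⟨hp.ne_zero⟩
  haveI : Finite G := Nat.finite_of_card_ne_zero (by rw [hcard]; exact pow_ne_zero _ hp.ne_zero)
  push_neg at hna
  obtain ⟨a, b, hab⟩ := hna
  -- the center has order p and the quotient is commutative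
  set Z := Subgroup.center G with hZdef
  obtain ⟨k, hk0, hkZ⟩ := IsPGroup.card_center_eq_prime_pow hcard (by norm_num)
  have hq : Nat.card (G ⧸ Z) * p ^ k = p ^ 3 := by
    rw [← hkZ, ← Subgroup.card_eq_card_quotient_mul_card_subgroup, hcard]
  have hk3 : k ≤ 3 := by
    have : p ^ k ∣ p ^ 3 := ⟨Nat.card (G ⧸ Z), by rw [← hq, mul_comm]⟩
    exact (Nat.pow_dvd_pow_iff_le_right hp.one_lt).mp this
  have hquot : Nat.card (G ⧸ Z) = p ^ (3 - k) := by
    have h2 := hq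
    rw [show (3 : ℕ) = (3 - k) + k from (Nat.sub_add_cancel hk3).symm, pow_add] at h2
    exact Nat.eq_of_mul_eq_mul_right (pow_pos hp.pos k) h2
  have hk1 : k = 1 := by
    by_contra hk1
    have hdq : Nat.card (G ⧸ Z) ∣ p := by
      rw [hquot]
      calc p ^ (3 - k) ∣ p ^ 1 := Nat.pow_dvd_pow p (by omega)
        _ = p := pow_one p
    haveI : IsCyclic (G ⧸ Z) := isCyclic_of_card_dvd_prime hdq
    exact hab (commutative_of_cyclic_center_quotient (QuotientGroup.mk' Z)
      (le_of_eq (QuotientGroup.ker_mk' Z)) a b)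
  have hcomm : ∀ x y : G ⧸ Z, x * y = y * x :=
    IsPGroup.commutative_of_card_eq_prime_sq (by rw [hquot, hk1])
  open scoped commutatorElement in
  set c := ⁅a, b⁆ with hcdef
  have hcZ : c ∈ Z := by
    have h1 : (QuotientGroup.mk' Z) c = 1 := by
      rw [hcdef, map_commutatorElement]
      exact commutatorElement_eq_one_iff_mul_comm.mpr (hcomm _ _)
    rw [← QuotientGroup.ker_mk' Z]
    exact h1
  have hc : ∀ g : G, Commute c g := fun g =>
    ((Subgroup.mem_center_iff.mp hcZ) g).symm
  have hba : b * a = a * b * c⁻¹ := by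
    have h1 : c * (b * a) = a * b := by rw [hcdef]; group
    have h2 : b * a = c⁻¹ * (a * b) := by rw [← h1]; group
    rw [h2, ((hc (a * b)).inv_left).eq]
  have ha1 : a ^ p = 1 := hexp a
  have hb1 : b ^ p = 1 := hexp b
  have hc1 : c ^ p = 1 := hexp c
  -- the key multiplication formula
  have key : ∀ u v w u' v' w' : ZMod p,
      (NA3.zp a u * NA3.zp b v * NA3.zp c w) * (NA3.zp a u' * NA3.zp b v' * NA3.zp c w')
        = NA3.zp a (u + u') * NA3.zp b (v + v') * NA3.zp c (w + w' - v * u') := by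
    intro u v w u' v' w'
    have e : w + w' - v * u' = (w + w') + (-(v * u')) := by ring
    rw [NA3.zp_add ha1, NA3.zp_add hb1, e, NA3.zp_add hc1, NA3.zp_add hc1,
      NA3.zp_neg hc1, NA3.zp_mul_pow hc1]
    unfold NA3.zp
    rw [NA3.keyN hc hba]
    simp [pow_add, mul_assoc]
  -- the homomorphism
  let φ : Unitriangular3 p →* G :=
    { toFun := fun M => NA3.zp a (M.1 1 2) * NA3.zp b (-(M.1 0 1)) * NA3.zp c (M.1 0 2)
      map_one' := by
        simp [Submonoid.coe_one, Matrix.one_apply, NA3.zp_zero]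
      map_mul' := by
        rintro ⟨M, m00, m11, m22, m10, m20, m21⟩ ⟨N, n00, n11, n22, n10, n20, n21⟩
        have e12 : (M * N) 1 2 = M 1 2 + N 1 2 := by
          simp [Matrix.mul_apply, Fin.sum_univ_three, m10, m11, m22, n22]
          exact add_comm _ _
        have e01 : (M * N) 0 1 = M 0 1 + N 0 1 := by
          simp [Matrix.mul_apply, Fin.sum_univ_three, m00, n11, n21]
          exact add_comm _ _
        have e02 : (M * N) 0 2 = N 0 2 + M 0 1 * N 1 2 + M 0 2 := by
          simp [Matrix.mul_apply, Fin.sum_univ_three, m00, n22]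
        simp only [Submonoid.coe_mul, e12, e01, e02]
        rw [key, neg_add]
        congr 1
        exact congrArg _ (by ring)
      }
  -- surjectivity
  have pow_inv : ∀ g : G, g ^ (p - 1) = g⁻¹ := by
    intro g
    apply eq_inv_of_mul_eq_one_left
    rw [← pow_succ, Nat.sub_add_cancel hp.one_lt.le, hexp]
  let T : Subgroup G :=
    { carrier := Set.range φ
      one_mem' := ⟨1, map_one φ⟩
      mul_mem' := by rintro _ _ ⟨M, rfl⟩ ⟨N, rfl⟩; exact ⟨M * N, map_mul φ M N⟩
      inv_mem' := by
        rintro _ ⟨M, rfl⟩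
        exact ⟨M ^ (p - 1), by rw [map_pow, pow_inv]⟩ }
  have haT : a ∈ T := by
    refine ⟨⟨!![1, 0, 0; 0, 1, 1; 0, 0, 1], rfl, rfl, rfl, rfl, rfl, rfl⟩, ?_⟩
    show NA3.zp a _ * NA3.zp b _ * NA3.zp c _ = a
    norm_num [NA3.zp_zero, NA3.zp_one hp.one_lt, Matrix.cons_val_two, Matrix.tail_cons, Matrix.head_cons]
  have hbT : b ∈ T := by
    refine ⟨⟨!![1, -1, 0; 0, 1, 0; 0, 0, 1], rfl, rfl, rfl, rfl, rfl, rfl⟩, ?_⟩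
    show NA3.zp a _ * NA3.zp b _ * NA3.zp c _ = b
    norm_num [NA3.zp_zero, NA3.zp_one hp.one_lt, Matrix.cons_val_two, Matrix.tail_cons, Matrix.head_cons]
  have hclosure : Subgroup.closure {a, b} ≤ T := by
    rw [Subgroup.closure_le]
    rintro x (rfl | rfl)
    · exact haT
    · exact hbT
  set K := Subgroup.closure {a, b} with hKdef
  have haK : a ∈ K := Subgroup.subset_closure (Set.mem_insert a {b})
  have hbK : b ∈ K := Subgroup.subset_closure (Set.mem_insert_of_mem _ rfl)
  have hKtop : K = ⊤ := by
    have hdvd : Nat.card K ∣ p ^ 3 := by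
      rw [← hcard]; exact Subgroup.card_subgroup_dvd_card K
    obtain ⟨k, hk3, hKcard⟩ := (Nat.dvd_prime_pow hp).mp hdvd
    interval_cases k
    · exfalso
      rw [pow_zero, Subgroup.card_eq_one] at hKcard
      rw [hKcard] at haK hbK
      rw [Subgroup.mem_bot] at haK hbK
      exact hab (by rw [haK, hbK])
    · exfalso
      rw [pow_one] at hKcard
      haveI : IsCyclic K := isCyclic_of_prime_card hKcard
      have := (IsCyclic.commGroup (α := K)).mul_comm ⟨a, haK⟩ ⟨b, hbK⟩
      exact hab (congrArg Subtype.val this)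
    · exfalso
      have := IsPGroup.commutative_of_card_eq_prime_sq hKcard ⟨a, haK⟩ ⟨b, hbK⟩
      exact hab (congrArg Subtype.val this)
    · exact Subgroup.eq_top_of_card_eq K (by rw [hKcard, hcard])
  have hTtop : T = ⊤ := top_le_iff.mp (hKtop ▸ hclosure)
  have hsurj : Function.Surjective φ := by
    intro g
    have : g ∈ T := hTtop ▸ Subgroup.mem_top g
    exact this
  haveI : Finite (Unitriangular3 p) := Finite.of_equiv _ (unitriEquiv p).symm
  have hbij : Function.Bijective φ :=
    (Nat.bijective_iff_surjective_and_card φ).mpr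
      ⟨hsurj, by rw [unitri_card, hcard]⟩
  exact ⟨(MulEquiv.ofBijective φ hbij).symm⟩
end

section
/- Let G be a cyclic group of order p acting on M = ℤ_p[X]/(1 + X + ⋯ + X^{p−1}) via a generator acting as multiplication by the class of X. Then the first group cohomology H^1(G, M) is isomorphic to ℤ/pℤ. -/
open Polynomial

/-- The module `M = ℤ_p[X]/(1 + X + ⋯ + X^{p−1})`. -/
abbrev CycloMod (p : ℕ) [Fact p.Prime] : Type :=
  ℤ_[p][X] ⧸ Ideal.span {(∑ i ∈ Finset.range p, X ^ i : ℤ_[p][X])}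

/-- The action of the generator `σ` of the cyclic group of order `p` on `M`:
multiplication by the class of `X`. -/
noncomputable def cycloSigma (p : ℕ) [Fact p.Prime] : Module.End ℤ_[p] (CycloMod p) :=
  LinearMap.mulLeft ℤ_[p]
    (Ideal.Quotient.mk (Ideal.span {(∑ i ∈ Finset.range p, X ^ i : ℤ_[p][X])}) X)

/-- The norm element `1 + σ + ⋯ + σ^{p−1}` acting on `M`. -/
noncomputable def cycloNorm (p : ℕ) [Fact p.Prime] : Module.End ℤ_[p] (CycloMod p) :=
  ∑ i ∈ Finset.range p, cycloSigma p ^ i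

/-!
The norm acts on `M` as multiplication by `Φ = 1 + X + ⋯ + X^{p−1}`, which is zero in `M`, so its
kernel is all of `M`; and `σ − 1` is multiplication by `X − 1`. Hence
`H¹ = M/(X − 1)M ≅ ℤ_p[X]/(Φ, X − 1) ≅ ℤ_p/(Φ(1)) = ℤ_p/(p) ≅ ℤ/pℤ`.
-/

theorem LinearMap.range_mulLeft_eq_span_singleton {R A : Type*} [CommSemiring R]
    [CommSemiring A] [Algebra R A] (a : A) :
    range (mulLeft R a) = (Ideal.span {a}).restrictScalars R := by
  ext x
  simp [Ideal.mem_span_singleton', mul_comm]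

noncomputable def Submodule.quotientComapSubtypeEquivOfEqTop {R M : Type*} [Ring R]
    [AddCommGroup M] [Module R M] {K : Submodule R M} (N : Submodule R M) (hK : K = ⊤) :
    (K ⧸ N.comap K.subtype) ≃ₗ[R] M ⧸ N :=
  Submodule.Quotient.equiv _ N (LinearEquiv.ofTop K hK) <| by
    subst hK
    ext x
    simp

namespace Polynomial

variable {R : Type*} [CommRing R]

theorem span_pair_X_sub_C_eq_span_C_eval (f : R[X]) (a : R) :
    Ideal.span {f, X - C a} = Ideal.span {C (f.eval a), X - C a} := by
  have hdiv := modByMonic_add_div f (X - C a)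
  rw [modByMonic_X_sub_C_eq_C_eval] at hdiv
  conv_lhs => rw [← hdiv]
  exact Ideal.span_pair_add_right_mul _ _ _

noncomputable def quotientSpanQuotientSpanXSubCEquiv (f : R[X]) (a : R) :
    (R[X] ⧸ Ideal.span {f}) ⧸ Ideal.span {Ideal.Quotient.mk (Ideal.span {f}) (X - C a)} ≃+*
      R ⧸ Ideal.span {f.eval a} :=
  (Ideal.quotEquivOfEq (by rw [Ideal.map_span, Set.image_singleton])).trans <|
    (DoubleQuot.quotQuotEquivQuotSup _ _).trans <|
      (Ideal.quotEquivOfEq (by rw [← Ideal.span_insert, span_pair_X_sub_C_eq_span_C_eval])).trans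
        (quotientSpanCXSubCAlgEquiv (f.eval a) a).toRingEquiv

end Polynomial

noncomputable def PadicInt.quotientSpanPEquiv (p : ℕ) [Fact p.Prime] :
    ℤ_[p] ⧸ Ideal.span {(p : ℤ_[p])} ≃+* ZMod p :=
  (Ideal.quotEquivOfEq maximalIdeal_eq_span_p.symm).trans residueField

section Cyclo

variable (p : ℕ) [Fact p.Prime]

theorem cycloNorm_eq_zero : cycloNorm p = 0 := by
  have hΦ : ∑ i ∈ Finset.range p, Ideal.Quotient.mk _ (X : ℤ_[p][X]) ^ i = (0 : CycloMod p) := by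
    simp only [← map_pow, ← map_sum]
    exact Ideal.Quotient.mk_singleton_self _
  refine LinearMap.ext fun m => ?_
  simp [cycloNorm, cycloSigma, LinearMap.pow_mulLeft, ← Finset.sum_mul, hΦ]

theorem cycloSigma_sub_one :
    cycloSigma p - 1 = LinearMap.mulLeft ℤ_[p] (Ideal.Quotient.mk _ (X - C 1)) := by
  refine LinearMap.ext fun m => ?_
  simp [cycloSigma, sub_mul]

end Cyclo

/-- For the cyclic group `G` of order `p` acting on `M = ℤ_p[X]/(1 + X + ⋯ + X^{p−1})`
via a generator acting as multiplication by `X`, one has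
`H¹(G, M) = ker(Norm)/im(σ−1) ≅ ℤ/pℤ`. -/
theorem H1_cyclotomic_module (p : ℕ) [Fact p.Prime] :
    Nonempty ((↥(LinearMap.ker (cycloNorm p)) ⧸
      Submodule.comap (LinearMap.ker (cycloNorm p)).subtype
        (LinearMap.range (cycloSigma p - 1))) ≃+ ZMod p) := by
  have hker : LinearMap.ker (cycloNorm p) = ⊤ := by rw [cycloNorm_eq_zero, LinearMap.ker_zero]
  have hΦ : eval 1 (∑ i ∈ Finset.range p, X ^ i : ℤ_[p][X]) = p := by simp
  rw [cycloSigma_sub_one, LinearMap.range_mulLeft_eq_span_singleton]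
  exact ⟨((Submodule.quotientComapSubtypeEquivOfEqTop _ hker).trans
    (Submodule.Quotient.restrictScalarsEquiv ℤ_[p] _)).toAddEquiv.trans <|
    ((quotientSpanQuotientSpanXSubCEquiv _ 1).trans <|
      (Ideal.quotEquivOfEq (by rw [hΦ])).trans (PadicInt.quotientSpanPEquiv p)).toAddEquiv⟩
end
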